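/- The proof system LocK45 is sound and complete with respect to the class K^{TE}_n of all local and proper doxastic Kripke models that are transitive and Euclidean, and the proof system LocKD45 is sound and complete with respect to the class K^{STE}_n of all local and proper doxastic Kripke models that are serial, transitive and Euclidean: for every formula φ of the doxastic fragment L_B, LocK45 ⊢ φ iff K^{TE}_n ⊨_k φ, and LocKD45 ⊢ φ iff K^{STE}_n ⊨_k φ. -/

import Mathlib

namespace DoxHG

/-- Formulas of the epistemic-doxastic language `L_KB`. -/
inductive Form (Ag Atom : Type) : Type
  | atom : Atom → Form Ag Atom
  | neg  : Form Ag Atom → Form Ag Atom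
  | and  : Form Ag Atom → Form Ag Atom → Form Ag Atom
  | B    : Ag → Form Ag Atom → Form Ag Atom
  | K    : Ag → Form Ag Atom → Form Ag Atom

namespace Form

variable {Ag Atom : Type}

/-- φ ∨ ψ := ¬(¬φ ∧ ¬ψ) -/
def or (φ ψ : Form Ag Atom) : Form Ag Atom := .neg (.and (.neg φ) (.neg ψ))

/-- φ → ψ := ¬φ ∨ ψ -/
def imp (φ ψ : Form Ag Atom) : Form Ag Atom := Form.or (.neg φ) ψ

/-- φ ↔ ψ -/
def biimp (φ ψ : Form Ag Atom) : Form Ag Atom := .and (φ.imp ψ) (ψ.imp φ)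

/-- ⊥ := p ∧ ¬p for an arbitrary but fixed propositional variable p. -/
def bot [Inhabited Atom] : Form Ag Atom := .and (.atom default) (.neg (.atom default))

/-- Membership in the doxastic fragment `L_B` (no knowledge operators). -/
def noK : Form Ag Atom → Prop
  | .atom _  => True
  | .neg φ   => φ.noK
  | .and φ ψ => φ.noK ∧ ψ.noK
  | .B _ φ   => φ.noK
  | .K _ _   => False

/-- φ is an `a`-formula: all variables are local variables of `a` (as given by
`owner`) and all modal operators are `B a` or `K a`. -/
def isAFormula (owner : Atom → Ag) (a : Ag) : Form Ag Atom → Prop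
  | .atom p  => owner p = a
  | .neg φ   => φ.isAFormula owner a
  | .and φ ψ => φ.isAFormula owner a ∧ ψ.isAFormula owner a
  | .B b φ   => b = a ∧ φ.isAFormula owner a
  | .K b φ   => b = a ∧ φ.isAFormula owner a

end Form

/-- φ is (an instance of) a classical propositional tautology: it evaluates to
true under every boolean valuation that respects negation and conjunction
(treating atoms and modal formulas as opaque). -/
def Tautology {Ag Atom : Type} (φ : Form Ag Atom) : Prop :=
  ∀ v : Form Ag Atom → Bool,
    (∀ ψ, v (.neg ψ) = !v ψ) →
    (∀ ψ χ, v (.and ψ χ) = (v ψ && v χ)) →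
    v φ = true

/-! ### Doxastic Kripke models -/

/-- A doxastic Kripke model (with set of worlds the type `W`, assumed nonempty
where required): doxastic accessibility relations `B a` and valuation `V`. -/
structure KModel (Ag Atom W : Type) where
  B : Ag → W → W → Prop
  V : W → Set Atom

section Kripke

variable {Ag Atom W : Type}

/-- Kripke satisfaction `⊨ₖ`; `K a` is interpreted via the equivalence relation
generated by `B a` (i.e. `Relation.EqvGen`, the smallest equivalence relation
containing it). -/
def ksat (M : KModel Ag Atom W) : W → Form Ag Atom → Prop
  | w, .atom p  => p ∈ M.V w
  | w, .neg φ   => ¬ ksat M w φ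
  | w, .and φ ψ => ksat M w φ ∧ ksat M w ψ
  | w, .B a φ   => ∀ u, M.B a w u → ksat M u φ
  | w, .K a φ   => ∀ u, Relation.EqvGen (M.B a) w u → ksat M u φ

def KModel.Serial (M : KModel Ag Atom W) : Prop := ∀ (a : Ag) (w : W), ∃ u, M.B a w u

def KModel.Transit (M : KModel Ag Atom W) : Prop :=
  ∀ (a : Ag) (u v w : W), M.B a u v → M.B a v w → M.B a u w

def KModel.Eucl (M : KModel Ag Atom W) : Prop :=
  ∀ (a : Ag) (u v w : W), M.B a u v → M.B a u w → M.B a v w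

/-- Locality: worlds related by `B a ∪ (B a)⁻¹` agree on the local variables of `a`. -/
def KModel.Local (owner : Atom → Ag) (M : KModel Ag Atom W) : Prop :=
  ∀ (a : Ag) (u v : W), (M.B a u v ∨ M.B a v u) →
    M.V u ∩ {p | owner p = a} = M.V v ∩ {p | owner p = a}

/-- Properness: distinct worlds are distinguished by some agent. -/
def KModel.Proper (M : KModel Ag Atom W) : Prop :=
  ∀ u v : W, u ≠ v → ∃ a : Ag, ¬ Relation.EqvGen (M.B a) u v

end Kripke

/-! ### The Hilbert systems EDL, LocK45 and LocKD45 -/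

section ProofSystems

variable {Ag Atom : Type}

/-- Provability in the Hilbert system EDL. -/
inductive EDLProv (owner : Atom → Ag) : Form Ag Atom → Prop
  | taut {φ : Form Ag Atom} : Tautology φ → EDLProv owner φ
  | axKB (a : Ag) (φ ψ : Form Ag Atom) :
      EDLProv owner ((Form.B a (φ.imp ψ)).imp ((Form.B a φ).imp (Form.B a ψ)))
  | axDB (a : Ag) (φ : Form Ag Atom) :
      EDLProv owner (Form.neg (Form.B a (Form.and φ (Form.neg φ))))
  | ax4B (a : Ag) (φ : Form Ag Atom) :
      EDLProv owner ((Form.B a φ).imp (Form.B a (Form.B a φ)))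
  | ax5B (a : Ag) (φ : Form Ag Atom) :
      EDLProv owner ((Form.neg (Form.B a φ)).imp (Form.B a (Form.neg (Form.B a φ))))
  | axKK (a : Ag) (φ ψ : Form Ag Atom) :
      EDLProv owner ((Form.K a (φ.imp ψ)).imp ((Form.K a φ).imp (Form.K a ψ)))
  | axTK (a : Ag) (φ : Form Ag Atom) :
      EDLProv owner ((Form.K a φ).imp φ)
  | ax4K (a : Ag) (φ : Form Ag Atom) :
      EDLProv owner ((Form.K a φ).imp (Form.K a (Form.K a φ)))
  | ax5K (a : Ag) (φ : Form Ag Atom) :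
      EDLProv owner ((Form.neg (Form.K a φ)).imp (Form.K a (Form.neg (Form.K a φ))))
  | axPI (a : Ag) (φ : Form Ag Atom) :
      EDLProv owner ((Form.B a φ).imp (Form.K a (Form.B a φ)))
  | axNI (a : Ag) (φ : Form Ag Atom) :
      EDLProv owner ((Form.neg (Form.B a φ)).imp (Form.K a (Form.neg (Form.B a φ))))
  | axKIB (a : Ag) (φ : Form Ag Atom) :
      EDLProv owner ((Form.K a φ).imp (Form.B a φ))
  | axLoc (a : Ag) (p : Atom) (h : owner p = a) :
      EDLProv owner (Form.and ((Form.atom p).imp (Form.B a (Form.atom p)))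
        ((Form.neg (Form.atom p)).imp (Form.B a (Form.neg (Form.atom p)))))
  | mp {φ ψ : Form Ag Atom} :
      EDLProv owner (φ.imp ψ) → EDLProv owner φ → EDLProv owner ψ
  | nec (a : Ag) {φ : Form Ag Atom} : EDLProv owner φ → EDLProv owner (Form.K a φ)

/-- Provability in the Hilbert systems over the doxastic fragment `L_B`:
`BProv owner true` is LocKD45 (with axiom D_B) and `BProv owner false` is
LocK45 (without D_B). -/
inductive BProv (owner : Atom → Ag) (withD : Bool) : Form Ag Atom → Prop
  | taut {φ : Form Ag Atom} : φ.noK → Tautology φ → BProv owner withD φ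
  | axKB (a : Ag) {φ ψ : Form Ag Atom} (hφ : φ.noK) (hψ : ψ.noK) :
      BProv owner withD ((Form.B a (φ.imp ψ)).imp ((Form.B a φ).imp (Form.B a ψ)))
  | axDB (a : Ag) {φ : Form Ag Atom} (hD : withD = true) (hφ : φ.noK) :
      BProv owner withD (Form.neg (Form.B a (Form.and φ (Form.neg φ))))
  | ax4B (a : Ag) {φ : Form Ag Atom} (hφ : φ.noK) :
      BProv owner withD ((Form.B a φ).imp (Form.B a (Form.B a φ)))
  | ax5B (a : Ag) {φ : Form Ag Atom} (hφ : φ.noK) :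
      BProv owner withD ((Form.neg (Form.B a φ)).imp (Form.B a (Form.neg (Form.B a φ))))
  | axLoc (a : Ag) (p : Atom) (h : owner p = a) :
      BProv owner withD (Form.and ((Form.atom p).imp (Form.B a (Form.atom p)))
        ((Form.neg (Form.atom p)).imp (Form.B a (Form.neg (Form.atom p)))))
  | mp {φ ψ : Form Ag Atom} :
      BProv owner withD (φ.imp ψ) → BProv owner withD φ → BProv owner withD ψ
  | nec (a : Ag) {φ : Form Ag Atom} : BProv owner withD φ → BProv owner withD (Form.B a φ)

/-- Conjunction of a finite list of formulas (the empty conjunction is ¬⊥). -/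
def conj [Inhabited Atom] : List (Form Ag Atom) → Form Ag Atom
  | []        => Form.neg Form.bot
  | [φ]       => φ
  | φ :: rest => Form.and φ (conj rest)

/-- Γ ⊢ φ in EDL: some finite subset Δ ⊆ Γ has EDL ⊢ (⋀Δ) → φ. -/
def ProvFrom [Inhabited Atom] (owner : Atom → Ag) (Γ : Set (Form Ag Atom))
    (φ : Form Ag Atom) : Prop :=
  ∃ L : List (Form Ag Atom), (∀ ψ ∈ L, ψ ∈ Γ) ∧ EDLProv owner ((conj L).imp φ)

/-- Γ is EDL-consistent. -/
def EDLConsistent [Inhabited Atom] (owner : Atom → Ag) (Γ : Set (Form Ag Atom)) : Prop :=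
  ¬ ProvFrom owner Γ Form.bot

/-- Γ is maximally EDL-consistent. -/
def MaxEDLConsistent [Inhabited Atom] (owner : Atom → Ag) (Γ : Set (Form Ag Atom)) : Prop :=
  EDLConsistent owner Γ ∧ ∀ Δ : Set (Form Ag Atom), Γ ⊂ Δ → ¬ EDLConsistent owner Δ

end ProofSystems

/-! ### Directed hypergraph models -/

/-- The undirected hyperedge `ē = T(e) ∪ H(e)` induced by a directed hyperedge
`e = (T(e), H(e))`. -/
def ebar {V : Type} (e : Set V × Set V) : Set V := e.1 ∪ e.2

/-- A (directed) hypergraph model: a vertex set, a set of directed hyperedges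
(pairs (tail, head)), a coloring and a valuation.  Well-formedness conditions
are stated separately. -/
structure HModel (Ag Atom V : Type) where
  Vset : Set V
  E : Set (Set V × Set V)
  χ : V → Ag
  ℓ : V → Set Atom

namespace HModel

variable {Ag Atom V : Type}

/-- `(Vset, E)` is a directed hypergraph: the vertex set is nonempty and every
hyperedge consists of a finite tail and a finite head, disjoint from each
other, both made of vertices. -/
def IsHypergraph (M : HModel Ag Atom V) : Prop :=
  M.Vset.Nonempty ∧
    ∀ e ∈ M.E, e.1 ⊆ M.Vset ∧ e.2 ⊆ M.Vset ∧ e.1.Finite ∧ e.2.Finite ∧ Disjoint e.1 e.2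

/-- χ is a coloring: distinct vertices of the same hyperedge get distinct colors. -/
def IsChromatic (M : HModel Ag Atom V) : Prop :=
  ∀ e ∈ M.E, Set.InjOn M.χ (ebar e)

/-- The valuation assigns to an `a`-colored vertex only local variables of `a`. -/
def ValOk (owner : Atom → Ag) (M : HModel Ag Atom V) : Prop :=
  ∀ v ∈ M.Vset, M.ℓ v ⊆ {p | owner p = M.χ v}

/-- M is a (well-formed, chromatic) hypergraph model. -/
def IsModel (owner : Atom → Ag) (M : HModel Ag Atom V) : Prop :=
  M.IsHypergraph ∧ M.IsChromatic ∧ M.ValOk owner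

/-- Simplicity: for distinct hyperedges, `ē₁ ⊄ ē₂`. -/
def Simple (M : HModel Ag Atom V) : Prop :=
  ∀ e₁ ∈ M.E, ∀ e₂ ∈ M.E, e₁ ≠ e₂ → ¬ ebar e₁ ⊆ ebar e₂

/-- n-uniformity: every hyperedge has exactly `n` vertices. -/
def Uniform (M : HModel Ag Atom V) (n : ℕ) : Prop :=
  ∀ e ∈ M.E, (ebar e).ncard = n

/-- Tail-completeness: every vertex lies in the tail of some hyperedge. -/
def TailComplete (M : HModel Ag Atom V) : Prop :=
  ∀ v ∈ M.Vset, ∃ e ∈ M.E, v ∈ e.1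

end HModel

section HSemantics

variable {Ag Atom V : Type}

/-- The doxastic accessibility relation `B^G_a` between hyperedges:
some `a`-colored vertex lies in `ē₁ ∩ T(e₂)`. -/
def Bacc (M : HModel Ag Atom V) (a : Ag) (e₁ e₂ : Set V × Set V) : Prop :=
  ∃ u : V, M.χ u = a ∧ u ∈ ebar e₁ ∧ u ∈ e₂.1

/-- The epistemic accessibility relation `K^G_a` between hyperedges:
some `a`-colored vertex lies in `ē₁ ∩ ē₂`. -/
def Kacc (M : HModel Ag Atom V) (a : Ag) (e₁ e₂ : Set V × Set V) : Prop :=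
  ∃ u : V, M.χ u = a ∧ u ∈ ebar e₁ ∧ u ∈ ebar e₂

/-- `ℓ(e) = ⋃_{u ∈ ē} ℓ(u)`. -/
def elabel (M : HModel Ag Atom V) (e : Set V × Set V) : Set Atom :=
  ⋃ u ∈ ebar e, M.ℓ u

/-- Hypergraph satisfaction `⊨ₕ`. -/
def hsat (M : HModel Ag Atom V) : Set V × Set V → Form Ag Atom → Prop
  | e, .atom p  => p ∈ elabel M e
  | e, .neg φ   => ¬ hsat M e φ
  | e, .and φ ψ => hsat M e φ ∧ hsat M e ψ
  | e, .B a φ   => ∀ e' ∈ M.E, Bacc M a e e' → hsat M e' φ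
  | e, .K a φ   => ∀ e' ∈ M.E, Kacc M a e e' → hsat M e' φ

end HSemantics

end DoxHG

namespace DoxHG


section Proof15

variable {Ag Atom : Type}

lemma ksat_imp {W} (M : KModel Ag Atom W) (w : W) (φ ψ : Form Ag Atom) :
    ksat M w (φ.imp ψ) ↔ (ksat M w φ → ksat M w ψ) := by
  simp only [Form.imp, Form.or, ksat]; tauto

/-! #### noK simp lemmas -/

@[simp] lemma noK_atom (p : Atom) : (Form.atom p : Form Ag Atom).noK := trivial

@[simp] lemma noK_neg (φ : Form Ag Atom) : (Form.neg φ).noK ↔ φ.noK := Iff.rfl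

@[simp] lemma noK_and (φ ψ : Form Ag Atom) : (Form.and φ ψ).noK ↔ φ.noK ∧ ψ.noK := Iff.rfl

@[simp] lemma noK_B (a : Ag) (φ : Form Ag Atom) : (Form.B a φ).noK ↔ φ.noK := Iff.rfl

@[simp] lemma noK_imp (φ ψ : Form Ag Atom) : (φ.imp ψ).noK ↔ φ.noK ∧ ψ.noK := by
  simp [Form.imp, Form.or]

/-! #### Tautology instances -/

lemma taut_I (φ : Form Ag Atom) : Tautology (φ.imp φ) := by
  intro v hn ha; simp only [Form.imp, Form.or, hn, ha]; cases v φ <;> rfl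

lemma taut_K (φ ψ : Form Ag Atom) : Tautology (φ.imp (ψ.imp φ)) := by
  intro v hn ha; simp only [Form.imp, Form.or, hn, ha]; cases v φ <;> cases v ψ <;> rfl

lemma taut_S (χ ψ ξ : Form Ag Atom) :
    Tautology ((χ.imp (ψ.imp ξ)).imp ((χ.imp ψ).imp (χ.imp ξ))) := by
  intro v hn ha; simp only [Form.imp, Form.or, hn, ha]
  cases v χ <;> cases v ψ <;> cases v ξ <;> rfl

lemma taut_trans (φ ψ χ : Form Ag Atom) :
    Tautology ((φ.imp ψ).imp ((ψ.imp χ).imp (φ.imp χ))) := by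
  intro v hn ha; simp only [Form.imp, Form.or, hn, ha]
  cases v φ <;> cases v ψ <;> cases v χ <;> rfl

lemma taut_dist (c1 c2 c3 a : Form Ag Atom) :
    Tautology ((c1.imp (c2.imp c3)).imp ((a.imp c1).imp ((a.imp c2).imp (a.imp c3)))) := by
  intro v hn ha; simp only [Form.imp, Form.or, hn, ha]
  cases v c1 <;> cases v c2 <;> cases v c3 <;> cases v a <;> rfl

lemma taut_contract (φ ψ : Form Ag Atom) :
    Tautology ((φ.imp (φ.imp ψ)).imp (φ.imp ψ)) := by
  intro v hn ha; simp only [Form.imp, Form.or, hn, ha]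
  cases v φ <;> cases v ψ <;> rfl

lemma taut_exch (φ χ ψ : Form Ag Atom) :
    Tautology ((φ.imp (χ.imp ψ)).imp (χ.imp (φ.imp ψ))) := by
  intro v hn ha; simp only [Form.imp, Form.or, hn, ha]
  cases v φ <;> cases v χ <;> cases v ψ <;> rfl

lemma taut_negE (ψ χ : Form Ag Atom) : Tautology (ψ.imp ((Form.neg ψ).imp χ)) := by
  intro v hn ha; simp only [Form.imp, Form.or, hn, ha]
  cases v ψ <;> cases v χ <;> rfl

lemma taut_negI (ψ χ : Form Ag Atom) :
    Tautology ((ψ.imp χ).imp ((ψ.imp (Form.neg χ)).imp (Form.neg ψ))) := by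
  intro v hn ha; simp only [Form.imp, Form.or, hn, ha]
  cases v ψ <;> cases v χ <;> rfl

lemma taut_dne (ψ : Form Ag Atom) : Tautology ((Form.neg (Form.neg ψ)).imp ψ) := by
  intro v hn ha; simp only [Form.imp, Form.or, hn, ha]; cases v ψ <;> rfl

lemma taut_clavius (ψ : Form Ag Atom) : Tautology (((Form.neg ψ).imp ψ).imp ψ) := by
  intro v hn ha; simp only [Form.imp, Form.or, hn, ha]; cases v ψ <;> rfl

lemma taut_pair (ψ χ : Form Ag Atom) : Tautology (ψ.imp (χ.imp (ψ.and χ))) := by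
  intro v hn ha; simp only [Form.imp, Form.or, hn, ha]
  cases v ψ <;> cases v χ <;> rfl

lemma taut_andL (ψ χ : Form Ag Atom) : Tautology ((ψ.and χ).imp ψ) := by
  intro v hn ha; simp only [Form.imp, Form.or, hn, ha]
  cases v ψ <;> cases v χ <;> rfl

lemma taut_andR (ψ χ : Form Ag Atom) : Tautology ((ψ.and χ).imp χ) := by
  intro v hn ha; simp only [Form.imp, Form.or, hn, ha]
  cases v ψ <;> cases v χ <;> rfl

/-! #### Derived Hilbert rules -/

section Hilbert

variable {owner : Atom → Ag} {withD : Bool}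

lemma prv_imp_trans {φ ψ χ : Form Ag Atom} (hφ : φ.noK) (hψ : ψ.noK) (hχ : χ.noK)
    (h1 : BProv owner withD (φ.imp ψ)) (h2 : BProv owner withD (ψ.imp χ)) :
    BProv owner withD (φ.imp χ) :=
  BProv.mp (BProv.mp (BProv.taut (by simp [*]) (taut_trans φ ψ χ)) h1) h2

lemma prv_imp_intro {φ ψ : Form Ag Atom} (hφ : φ.noK) (hψ : ψ.noK)
    (h : BProv owner withD ψ) : BProv owner withD (φ.imp ψ) :=
  BProv.mp (BProv.taut (by simp [*]) (taut_K ψ φ)) h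

lemma prv_mono_imp {a φ ψ : Form Ag Atom} (ha : a.noK) (hφ : φ.noK) (hψ : ψ.noK)
    (h : BProv owner withD (φ.imp ψ)) :
    BProv owner withD ((a.imp φ).imp (a.imp ψ)) := by
  have h1 : BProv owner withD (a.imp (φ.imp ψ)) := prv_imp_intro ha (by simp [*]) h
  exact BProv.mp (BProv.taut (by simp [*]) (taut_S a φ ψ)) h1

/-- Nested-implication conjunction of a list of premises. -/
def chain : List (Form Ag Atom) → Form Ag Atom → Form Ag Atom
  | [], φ => φ
  | ψ :: L, φ => ψ.imp (chain L φ)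

@[simp] lemma chain_nil (φ : Form Ag Atom) : chain [] φ = φ := rfl

@[simp] lemma chain_cons (ψ : Form Ag Atom) (L : List (Form Ag Atom)) (φ : Form Ag Atom) :
    chain (ψ :: L) φ = ψ.imp (chain L φ) := rfl

lemma chain_append (L1 L2 : List (Form Ag Atom)) (φ : Form Ag Atom) :
    chain (L1 ++ L2) φ = chain L1 (chain L2 φ) := by
  induction L1 with
  | nil => rfl
  | cons a L ih => simp [ih]

lemma noK_chain {L : List (Form Ag Atom)} {φ : Form Ag Atom}
    (hL : ∀ ψ ∈ L, ψ.noK) (hφ : φ.noK) : (chain L φ).noK := by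
  induction L with
  | nil => exact hφ
  | cons a L ih =>
      refine (noK_imp _ _).2 ⟨hL a (by simp), ih fun ψ hψ => hL ψ (by simp [hψ])⟩

lemma prv_weak {φ : Form Ag Atom} (L : List (Form Ag Atom))
    (hL : ∀ ψ ∈ L, ψ.noK) (hφ : φ.noK)
    (h : BProv owner withD φ) : BProv owner withD (chain L φ) := by
  induction L with
  | nil => exact h
  | cons a L ih =>
      have h1 := ih fun ψ hψ => hL ψ (by simp [hψ])
      exact prv_imp_intro (hL a (by simp)) (noK_chain (fun ψ hψ => hL ψ (by simp [hψ])) hφ) h1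

lemma prv_chain_mono {φ ψ : Form Ag Atom} (L : List (Form Ag Atom))
    (hL : ∀ χ ∈ L, χ.noK) (hφ : φ.noK) (hψ : ψ.noK)
    (h : BProv owner withD (φ.imp ψ)) :
    BProv owner withD ((chain L φ).imp (chain L ψ)) := by
  induction L with
  | nil => exact h
  | cons a L ih =>
      have hL' : ∀ χ ∈ L, Form.noK χ := fun χ hχ => hL χ (by simp [hχ])
      exact prv_mono_imp (hL a (by simp)) (noK_chain hL' hφ) (noK_chain hL' hψ)
        (ih hL')

lemma prv_chain_dist {φ ψ : Form Ag Atom} (L : List (Form Ag Atom))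
    (hL : ∀ χ ∈ L, χ.noK) (hφ : φ.noK) (hψ : ψ.noK) :
    BProv owner withD ((chain L (φ.imp ψ)).imp ((chain L φ).imp (chain L ψ))) := by
  induction L with
  | nil => exact BProv.taut (by simp [*]) (taut_I (φ.imp ψ))
  | cons a L ih =>
      have hL' : ∀ χ ∈ L, Form.noK χ := fun χ hχ => hL χ (by simp [hχ])
      have ha : a.noK := hL a (by simp)
      have h1 := ih hL'
      have hc1 : (chain L (φ.imp ψ)).noK := noK_chain hL' (by simp [*])
      have hc2 : (chain L φ).noK := noK_chain hL' hφ
      have hc3 : (chain L ψ).noK := noK_chain hL' hψ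
      exact BProv.mp (BProv.taut (by simp [*])
        (taut_dist (chain L (φ.imp ψ)) (chain L φ) (chain L ψ) a)) h1

lemma prv_chain_mp {φ ψ : Form Ag Atom} (L : List (Form Ag Atom))
    (hL : ∀ χ ∈ L, χ.noK) (hφ : φ.noK) (hψ : ψ.noK)
    (h1 : BProv owner withD (chain L (φ.imp ψ))) (h2 : BProv owner withD (chain L φ)) :
    BProv owner withD (chain L ψ) :=
  BProv.mp (BProv.mp (prv_chain_dist L hL hφ hψ) h1) h2

lemma prv_intro_chain {φ : Form Ag Atom} (L : List (Form Ag Atom))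
    (hL : ∀ χ ∈ L, χ.noK) (hφ : φ.noK) :
    BProv owner withD (φ.imp (chain L φ)) := by
  induction L with
  | nil => exact BProv.taut (by simp [*]) (taut_I φ)
  | cons a L ih =>
      have hL' : ∀ χ ∈ L, Form.noK χ := fun χ hχ => hL χ (by simp [hχ])
      have ha : a.noK := hL a (by simp)
      have hc : (chain L φ).noK := noK_chain hL' hφ
      refine prv_imp_trans hφ hc (by simp [*]) (ih hL') ?_
      exact BProv.taut (by simp [*]) (taut_K (chain L φ) a)

/-! #### Deduction theorem machinery -/

open Classical in
/-- Remove all occurrences of `φ` from a list. -/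
noncomputable def removeF (φ : Form Ag Atom) (L : List (Form Ag Atom)) :
    List (Form Ag Atom) :=
  L.filter (fun χ => decide (χ ≠ φ))

open Classical in
lemma mem_removeF {φ χ : Form Ag Atom} {L : List (Form Ag Atom)} :
    χ ∈ removeF φ L ↔ χ ∈ L ∧ χ ≠ φ := by
  simp [removeF, List.mem_filter]

open Classical in
lemma removeF_cons (φ a : Form Ag Atom) (L : List (Form Ag Atom)) :
    removeF φ (a :: L) = if a = φ then removeF φ L else a :: removeF φ L := by
  by_cases h : a = φ <;> simp [removeF, List.filter_cons, h]

section Hilbert2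

variable {owner : Atom → Ag} {withD : Bool}

lemma prv_absorb {φ ψ : Form Ag Atom} (M : List (Form Ag Atom))
    (hM : ∀ χ ∈ M, χ.noK) (hφ : φ.noK) (hψ : ψ.noK) :
    BProv owner withD ((φ.imp (chain M (φ.imp ψ))).imp (chain M (φ.imp ψ))) := by
  induction M with
  | nil => exact BProv.taut (by simp [*]) (taut_contract φ ψ)
  | cons a M ih =>
      have hM' : ∀ χ ∈ M, Form.noK χ := fun χ hχ => hM χ (by simp [hχ])
      have ha : a.noK := hM a (by simp)
      have hY : (chain M (φ.imp ψ)).noK := noK_chain hM' (by simp [*])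
      have h1 : BProv owner withD ((φ.imp (a.imp (chain M (φ.imp ψ)))).imp
          (a.imp (φ.imp (chain M (φ.imp ψ))))) :=
        BProv.taut (by simp [*]) (taut_exch φ a (chain M (φ.imp ψ)))
      have h2 : BProv owner withD ((a.imp (φ.imp (chain M (φ.imp ψ)))).imp
          (a.imp (chain M (φ.imp ψ)))) :=
        prv_mono_imp ha (by simp [*]) hY (ih hM')
      exact prv_imp_trans (by simp [*]) (by simp [*]) (by simp [*]) h1 h2

lemma prv_extract {φ ψ : Form Ag Atom} (L : List (Form Ag Atom))
    (hL : ∀ χ ∈ L, χ.noK) (hφ : φ.noK) (hψ : ψ.noK) :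
    BProv owner withD ((chain L ψ).imp (chain (removeF φ L) (φ.imp ψ))) := by
  induction L with
  | nil =>
      rw [show removeF φ ([] : List (Form Ag Atom)) = [] from rfl]
      exact BProv.taut (by simp [*]) (taut_K ψ φ)
  | cons a L ih =>
      have hL' : ∀ χ ∈ L, Form.noK χ := fun χ hχ => hL χ (by simp [hχ])
      have ha : a.noK := hL a (by simp)
      have hrem : ∀ χ ∈ removeF φ L, Form.noK χ := fun χ hχ => hL' χ (mem_removeF.1 hχ).1
      have hY : (chain (removeF φ L) (φ.imp ψ)).noK := noK_chain hrem (by simp [*])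
      have hX : (chain L ψ).noK := noK_chain hL' hψ
      have h1 : BProv owner withD ((a.imp (chain L ψ)).imp (a.imp (chain (removeF φ L) (φ.imp ψ)))) :=
        prv_mono_imp ha hX hY (ih hL')
      rw [removeF_cons]
      by_cases hc : a = φ
      · subst hc
        simp only [if_pos rfl]
        exact prv_imp_trans (by simp [*]) (by simp [*]) hY h1 (prv_absorb _ hrem hφ hψ)
      · simp only [if_neg hc]
        exact h1

/-! #### Derivability from a set -/

/-- Derivability of φ from the set Γ in the system `BProv owner withD`. -/
def Deriv (owner : Atom → Ag) (withD : Bool) (Γ : Set (Form Ag Atom))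
    (φ : Form Ag Atom) : Prop :=
  ∃ L : List (Form Ag Atom), (∀ ψ ∈ L, ψ ∈ Γ) ∧ (∀ ψ ∈ L, ψ.noK) ∧
    BProv owner withD (chain L φ)

lemma Deriv.of_prv {Γ : Set (Form Ag Atom)} {φ : Form Ag Atom}
    (h : BProv owner withD φ) : Deriv owner withD Γ φ :=
  ⟨[], by simp, by simp, h⟩

lemma Deriv.of_mem {Γ : Set (Form Ag Atom)} {φ : Form Ag Atom}
    (hφ : φ.noK) (h : φ ∈ Γ) : Deriv owner withD Γ φ :=
  ⟨[φ], by simp [h], by simp [hφ], BProv.taut (by simp [*]) (taut_I φ)⟩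

lemma Deriv.mono {Γ Δ : Set (Form Ag Atom)} {φ : Form Ag Atom}
    (hsub : Γ ⊆ Δ) (h : Deriv owner withD Γ φ) : Deriv owner withD Δ φ := by
  obtain ⟨L, h1, h2, h3⟩ := h
  exact ⟨L, fun ψ hψ => hsub (h1 ψ hψ), h2, h3⟩

lemma Deriv.mp {Γ : Set (Form Ag Atom)} {φ ψ : Form Ag Atom}
    (hφ : φ.noK) (hψ : ψ.noK)
    (h1 : Deriv owner withD Γ (φ.imp ψ)) (h2 : Deriv owner withD Γ φ) :
    Deriv owner withD Γ ψ := by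
  obtain ⟨L1, hm1, hk1, hp1⟩ := h1
  obtain ⟨L2, hm2, hk2, hp2⟩ := h2
  refine ⟨L1 ++ L2, ?_, ?_, ?_⟩
  · intro χ hχ; rcases List.mem_append.1 hχ with h | h
    · exact hm1 χ h
    · exact hm2 χ h
  · intro χ hχ; rcases List.mem_append.1 hχ with h | h
    · exact hk1 χ h
    · exact hk2 χ h
  · have hk12 : ∀ χ ∈ L1 ++ L2, Form.noK χ := by
      intro χ hχ; rcases List.mem_append.1 hχ with h | h
      · exact hk1 χ h
      · exact hk2 χ h
    rw [chain_append]
    have e1 : BProv owner withD (chain L1 (chain L2 (φ.imp ψ))) :=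
      BProv.mp (prv_chain_mono L1 hk1 (by simp [*]) (noK_chain hk2 (by simp [*]))
        (prv_intro_chain L2 hk2 (by simp [*]))) hp1
    have e2 : BProv owner withD (chain L1 (chain L2 φ)) :=
      prv_weak L1 hk1 (noK_chain hk2 hφ) hp2
    have e3 := prv_chain_mp (owner := owner) (withD := withD) (L1 ++ L2) hk12 hφ hψ
    simp only [chain_append] at e3
    exact e3 e1 e2

/-- Deduction theorem. -/
lemma Deriv.deduction {Γ : Set (Form Ag Atom)} {φ ψ : Form Ag Atom}
    (hφ : φ.noK) (hψ : ψ.noK)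
    (h : Deriv owner withD (insert φ Γ) ψ) : Deriv owner withD Γ (φ.imp ψ) := by
  obtain ⟨L, hm, hk, hp⟩ := h
  refine ⟨removeF φ L, ?_, ?_, ?_⟩
  · intro χ hχ
    obtain ⟨hχL, hne⟩ := mem_removeF.1 hχ
    rcases hm χ hχL with h | h
    · exact absurd h hne
    · exact h
  · intro χ hχ; exact hk χ (mem_removeF.1 hχ).1
  · exact BProv.mp (prv_extract L hk hφ hψ) hp

end Hilbert2

end Hilbert



/-! #### Consistent and maximal consistent sets -/

section MCSsec

variable {owner : Atom → Ag} {withD : Bool}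

/-- Γ is consistent w.r.t. `BProv owner withD`. -/
def ConsS (owner : Atom → Ag) (withD : Bool) (Γ : Set (Form Ag Atom)) : Prop :=
  ¬ ∃ ψ : Form Ag Atom, ψ.noK ∧ Deriv owner withD Γ ψ ∧ Deriv owner withD Γ (Form.neg ψ)

/-- Γ is a maximal consistent set of `L_B`-formulas. -/
structure MCS (owner : Atom → Ag) (withD : Bool) (Γ : Set (Form Ag Atom)) : Prop where
  subK : ∀ ψ ∈ Γ, Form.noK ψ
  cons : ConsS owner withD Γ
  comp : ∀ ψ : Form Ag Atom, ψ.noK → ψ ∈ Γ ∨ Form.neg ψ ∈ Γ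

lemma ConsS.mono {Γ Δ : Set (Form Ag Atom)} (h : ConsS owner withD Δ) (hsub : Γ ⊆ Δ) :
    ConsS owner withD Γ := by
  intro ⟨ψ, h1, h2, h3⟩
  exact h ⟨ψ, h1, h2.mono hsub, h3.mono hsub⟩

lemma MCS.mem_of_deriv {Γ : Set (Form Ag Atom)} (hΓ : MCS owner withD Γ)
    {ψ : Form Ag Atom} (hψ : ψ.noK) (h : Deriv owner withD Γ ψ) : ψ ∈ Γ := by
  rcases hΓ.comp ψ hψ with hm | hm
  · exact hm
  · exact absurd ⟨ψ, hψ, h, Deriv.of_mem (by simp [hψ]) hm⟩ hΓ.cons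

lemma MCS.mem_of_prv {Γ : Set (Form Ag Atom)} (hΓ : MCS owner withD Γ)
    {ψ : Form Ag Atom} (hψ : ψ.noK) (h : BProv owner withD ψ) : ψ ∈ Γ :=
  hΓ.mem_of_deriv hψ (Deriv.of_prv h)

lemma MCS.not_mem_iff {Γ : Set (Form Ag Atom)} (hΓ : MCS owner withD Γ)
    {ψ : Form Ag Atom} (hψ : ψ.noK) : ψ ∉ Γ ↔ Form.neg ψ ∈ Γ := by
  constructor
  · intro h
    rcases hΓ.comp ψ hψ with hm | hm
    · exact absurd hm h
    · exact hm
  · intro h hm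
    exact hΓ.cons ⟨ψ, hψ, Deriv.of_mem hψ hm, Deriv.of_mem (by simp [hψ]) h⟩

lemma MCS.mp_mem {Γ : Set (Form Ag Atom)} (hΓ : MCS owner withD Γ)
    {φ ψ : Form Ag Atom} (hφ : φ.noK) (hψ : ψ.noK)
    (h1 : (φ.imp ψ) ∈ Γ) (h2 : φ ∈ Γ) : ψ ∈ Γ :=
  hΓ.mem_of_deriv hψ ((Deriv.of_mem (by simp [hφ, hψ]) h1).mp hφ hψ (Deriv.of_mem hφ h2))

lemma MCS.and_mem {Γ : Set (Form Ag Atom)} (hΓ : MCS owner withD Γ)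
    {φ ψ : Form Ag Atom} (hφ : φ.noK) (hψ : ψ.noK) :
    (Form.and φ ψ) ∈ Γ ↔ φ ∈ Γ ∧ ψ ∈ Γ := by
  constructor
  · intro h
    constructor
    · exact hΓ.mp_mem (by simp [hφ, hψ]) hφ
        (hΓ.mem_of_prv (by simp [hφ, hψ]) (BProv.taut (by simp [hφ, hψ]) (taut_andL φ ψ))) h
    · exact hΓ.mp_mem (by simp [hφ, hψ]) hψ
        (hΓ.mem_of_prv (by simp [hφ, hψ]) (BProv.taut (by simp [hφ, hψ]) (taut_andR φ ψ))) h
  · intro ⟨h1, h2⟩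
    have := hΓ.mem_of_prv (ψ := φ.imp (ψ.imp (φ.and ψ))) (by simp [hφ, hψ])
      (BProv.taut (by simp [hφ, hψ]) (taut_pair φ ψ))
    exact hΓ.mp_mem hψ (by simp [hφ, hψ]) (hΓ.mp_mem hφ (by simp [hφ, hψ]) this h1) h2

/-- A finite list inside the union of a nonempty chain lies inside one member. -/
lemma list_subset_chain {c : Set (Set (Form Ag Atom))} (hchain : IsChain (· ⊆ ·) c)
    (hne : c.Nonempty) (L : List (Form Ag Atom)) (hL : ∀ ψ ∈ L, ψ ∈ ⋃₀ c) :
    ∃ t ∈ c, ∀ ψ ∈ L, ψ ∈ t := by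
  induction L with
  | nil => exact ⟨hne.choose, hne.choose_spec, by simp⟩
  | cons a L ih =>
      obtain ⟨t, ht, hT⟩ := ih fun ψ hψ => hL ψ (by simp [hψ])
      obtain ⟨s, hs, has⟩ := hL a (by simp)
      by_cases hst : s = t
      · exact ⟨t, ht, by
          intro ψ hψ
          rcases List.mem_cons.1 hψ with rfl | h
          · exact hst ▸ has
          · exact hT ψ h⟩
      · rcases hchain hs ht hst with hsub | hsub
        · exact ⟨t, ht, by
            intro ψ hψ
            rcases List.mem_cons.1 hψ with rfl | h
            · exact hsub has
            · exact hT ψ h⟩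
        · exact ⟨s, hs, by
            intro ψ hψ
            rcases List.mem_cons.1 hψ with rfl | h
            · exact has
            · exact hsub (hT ψ h)⟩

/-- Lindenbaum's lemma. -/
lemma lindenbaum {Γ₀ : Set (Form Ag Atom)} (hsub : ∀ ψ ∈ Γ₀, Form.noK ψ)
    (hcons : ConsS owner withD Γ₀) :
    ∃ Γ : Set (Form Ag Atom), Γ₀ ⊆ Γ ∧ MCS owner withD Γ := by
  set S : Set (Set (Form Ag Atom)) :=
    {Δ | (∀ ψ ∈ Δ, Form.noK ψ) ∧ ConsS owner withD Δ} with hS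
  have hzorn := zorn_subset_nonempty S ?_ Γ₀ ⟨hsub, hcons⟩
  · obtain ⟨m, hm0, hmS, hmax⟩ := hzorn
    refine ⟨m, hm0, ⟨hmS.1, hmS.2, ?_⟩⟩
    intro ψ hψ
    by_contra hcon
    push_neg at hcon
    obtain ⟨h1, h2⟩ := hcon
    -- both insert ψ m and insert ψ.neg m are inconsistent
    have key : ∀ χ : Form Ag Atom, χ.noK → χ ∉ m →
        ¬ ConsS owner withD (insert χ m) → Deriv owner withD m (Form.neg χ) := by
      intro χ hχ hχm hic
      rw [ConsS] at hic
      push_neg at hic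
      obtain ⟨ξ, hξ, d1, d2⟩ := hic
      have e1 : Deriv owner withD m (χ.imp ξ) := Deriv.deduction hχ hξ d1
      have e2 : Deriv owner withD m (χ.imp (Form.neg ξ)) := Deriv.deduction hχ (by simp [hξ]) d2
      have t : BProv owner withD ((χ.imp ξ).imp ((χ.imp (Form.neg ξ)).imp (Form.neg χ))) :=
        BProv.taut (by simp [hχ, hξ]) (taut_negI χ ξ)
      exact ((Deriv.of_prv t).mp (by simp [hχ, hξ]) (by simp [hχ, hξ]) e1).mp
        (by simp [hχ, hξ]) (by simp [hχ]) e2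
    have hic1 : ¬ ConsS owner withD (insert ψ m) := by
      intro hc
      have : insert ψ m ∈ S := ⟨by
        intro χ hχ
        rcases Set.mem_insert_iff.1 hχ with rfl | h
        · exact hψ
        · exact hmS.1 χ h, hc⟩
      exact h1 (hmax this (Set.subset_insert _ _) (Set.mem_insert _ _))
    have hic2 : ¬ ConsS owner withD (insert (Form.neg ψ) m) := by
      intro hc
      have : insert (Form.neg ψ) m ∈ S := ⟨by
        intro χ hχ
        rcases Set.mem_insert_iff.1 hχ with rfl | h
        · simpa using hψ
        · exact hmS.1 χ h, hc⟩
      exact h2 (hmax this (Set.subset_insert _ _) (Set.mem_insert _ _))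
    have d1 : Deriv owner withD m (Form.neg ψ) := key ψ hψ h1 hic1
    have d2 : Deriv owner withD m (Form.neg (Form.neg ψ)) := key (Form.neg ψ) (by simp [hψ]) h2 hic2
    exact hmS.2 ⟨Form.neg ψ, by simp [hψ], d1, d2⟩
  · intro c hcS hchain hcne
    refine ⟨⋃₀ c, ⟨?_, ?_⟩, fun s hs => Set.subset_sUnion_of_mem hs⟩
    · intro ψ hψ
      obtain ⟨t, ht, hψt⟩ := hψ
      exact (hcS ht).1 ψ hψt
    · intro ⟨ψ, hψ, ⟨L1, hm1, hk1, hp1⟩, ⟨L2, hm2, hk2, hp2⟩⟩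
      obtain ⟨t, ht, hT⟩ := list_subset_chain hchain hcne (L1 ++ L2) (by
        intro χ hχ
        rcases List.mem_append.1 hχ with h | h
        · exact hm1 χ h
        · exact hm2 χ h)
      refine (hcS ht).2 ⟨ψ, hψ, ⟨L1, ?_, hk1, hp1⟩, ⟨L2, ?_, hk2, hp2⟩⟩
      · exact fun χ hχ => hT χ (List.mem_append.2 (Or.inl hχ))
      · exact fun χ hχ => hT χ (List.mem_append.2 (Or.inr hχ))

end MCSsec

/-! #### The canonical model -/

section Canon

variable {owner : Atom → Ag} {withD : Bool}

lemma prv_B_chain (a : Ag) {ψ : Form Ag Atom} (L : List (Form Ag Atom))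
    (hL : ∀ χ ∈ L, χ.noK) (hψ : ψ.noK) :
    BProv owner withD ((Form.B a (chain L ψ)).imp
      (chain (L.map (Form.B a)) (Form.B a ψ))) := by
  induction L with
  | nil => exact BProv.taut (by simp [hψ]) (taut_I _)
  | cons χ L ih =>
      have hL' : ∀ ξ ∈ L, Form.noK ξ := fun ξ hξ => hL ξ (by simp [hξ])
      have hχ : χ.noK := hL χ (by simp)
      have hC : (chain L ψ).noK := noK_chain hL' hψ
      have hmap : ∀ ξ ∈ L.map (Form.B a), Form.noK ξ := by
        intro ξ hξ
        obtain ⟨ζ, hζ, rfl⟩ := List.mem_map.1 hξ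
        simpa using hL' ζ hζ
      have h1 : BProv owner withD ((Form.B a (χ.imp (chain L ψ))).imp
          ((Form.B a χ).imp (Form.B a (chain L ψ)))) := BProv.axKB a hχ hC
      have h2 : BProv owner withD (((Form.B a χ).imp (Form.B a (chain L ψ))).imp
          ((Form.B a χ).imp (chain (L.map (Form.B a)) (Form.B a ψ)))) :=
        prv_mono_imp (by simp [hχ]) (by simp [hC]) (noK_chain hmap (by simp [hψ])) (ih hL')
      simpa using prv_imp_trans (by simp [hχ, hC]) (by simp [hχ, hC])
        (by simp [hχ]; exact noK_chain hmap (by simp [hψ])) h1 h2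

/-- The set of formulas believed by `a` at Γ. -/
def projB (Γ : Set (Form Ag Atom)) (a : Ag) : Set (Form Ag Atom) :=
  {χ | Form.B a χ ∈ Γ}

lemma projB_noK {Γ : Set (Form Ag Atom)} (hΓ : ∀ ψ ∈ Γ, Form.noK ψ) (a : Ag) :
    ∀ ψ ∈ projB Γ a, Form.noK ψ := fun ψ hψ => by simpa using hΓ _ hψ

lemma projB_deriv {Γ : Set (Form Ag Atom)} (hΓ : MCS owner withD Γ) {a : Ag}
    {ψ : Form Ag Atom} (hψ : ψ.noK) (h : Deriv owner withD (projB Γ a) ψ) :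
    Form.B a ψ ∈ Γ := by
  obtain ⟨L, hm, hk, hp⟩ := h
  have h1 : BProv owner withD (Form.B a (chain L ψ)) := BProv.nec a hp
  have h2 : BProv owner withD (chain (L.map (Form.B a)) (Form.B a ψ)) :=
    BProv.mp (prv_B_chain a L hk hψ) h1
  exact hΓ.mem_of_deriv (by simp [hψ])
    ⟨L.map (Form.B a), by
      intro χ hχ
      obtain ⟨ζ, hζ, rfl⟩ := List.mem_map.1 hχ
      exact hm ζ hζ, by
      intro χ hχ
      obtain ⟨ζ, hζ, rfl⟩ := List.mem_map.1 hχ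
      simpa using hk ζ hζ, h2⟩

/-- Existence lemma. -/
lemma existence {Γ : Set (Form Ag Atom)} (hΓ : MCS owner withD Γ) {a : Ag}
    {ψ : Form Ag Atom} (hψ : ψ.noK) (h : Form.B a ψ ∉ Γ) :
    ∃ Δ : Set (Form Ag Atom), MCS owner withD Δ ∧ projB Γ a ⊆ Δ ∧ ψ ∉ Δ := by
  have hcons : ConsS owner withD (insert (Form.neg ψ) (projB Γ a)) := by
    intro ⟨ξ, hξ, d1, d2⟩
    have dψ : Deriv owner withD (insert (Form.neg ψ) (projB Γ a)) ψ := by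
      have t : BProv owner withD (ξ.imp ((Form.neg ξ).imp ψ)) :=
        BProv.taut (by simp [hξ, hψ]) (taut_negE ξ ψ)
      exact ((Deriv.of_prv t).mp hξ (by simp [hξ, hψ]) d1).mp (by simp [hξ]) hψ d2
    have d3 : Deriv owner withD (projB Γ a) ((Form.neg ψ).imp ψ) :=
      Deriv.deduction (by simp [hψ]) hψ dψ
    have d4 : Deriv owner withD (projB Γ a) ψ :=
      (Deriv.of_prv (BProv.taut (by simp [hψ]) (taut_clavius ψ))).mp
        (by simp [hψ]) hψ d3
    exact h (projB_deriv hΓ hψ d4)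
  obtain ⟨Δ, hsub, hΔ⟩ := lindenbaum (by
    intro χ hχ
    rcases Set.mem_insert_iff.1 hχ with rfl | hm
    · simpa using hψ
    · exact projB_noK hΓ.subK a χ hm) hcons
  refine ⟨Δ, hΔ, fun χ hχ => hsub (Set.mem_insert_of_mem _ hχ), ?_⟩
  intro hmem
  exact hΔ.cons ⟨ψ, hψ, Deriv.of_mem hψ hmem,
    Deriv.of_mem (by simp [hψ]) (hsub (Set.mem_insert _ _))⟩

/-- Worlds of the canonical model. -/
def CanW (owner : Atom → Ag) (withD : Bool) : Type :=
  {Γ : Set (Form Ag Atom) // MCS owner withD Γ}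

/-- The canonical model. -/
def CanM (owner : Atom → Ag) (withD : Bool) : KModel Ag Atom (CanW owner withD) where
  B a Γ Δ := ∀ ψ : Form Ag Atom, Form.B a ψ ∈ Γ.1 → ψ ∈ Δ.1
  V Γ := {p | Form.atom p ∈ Γ.1}

/-- Truth lemma. -/
lemma truth_lemma : ∀ (ψ : Form Ag Atom), ψ.noK → ∀ Γ : CanW owner withD,
    (ksat (CanM owner withD) Γ ψ ↔ ψ ∈ Γ.1) := by
  intro ψ
  induction ψ with
  | atom p => intro _ Γ; rfl
  | neg ψ ih =>
      intro hK Γ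
      have hψ : ψ.noK := hK
      rw [show ksat (CanM owner withD) Γ (Form.neg ψ) ↔ ¬ ksat (CanM owner withD) Γ ψ from Iff.rfl,
        ih hψ Γ]
      exact Γ.2.not_mem_iff hψ
  | and ψ χ ih1 ih2 =>
      intro hK Γ
      obtain ⟨hψ, hχ⟩ := hK
      rw [show ksat (CanM owner withD) Γ (Form.and ψ χ) ↔
        (ksat (CanM owner withD) Γ ψ ∧ ksat (CanM owner withD) Γ χ) from Iff.rfl,
        ih1 hψ Γ, ih2 hχ Γ]
      exact (Γ.2.and_mem hψ hχ).symm
  | B a ψ ih =>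
      intro hK Γ
      have hψ : ψ.noK := hK
      constructor
      · intro h
        by_contra hmem
        obtain ⟨Δ, hΔ, hsub, hnΔ⟩ := existence Γ.2 hψ hmem
        have hacc : (CanM owner withD).B a Γ ⟨Δ, hΔ⟩ := fun χ hχ => hsub hχ
        exact hnΔ ((ih hψ ⟨Δ, hΔ⟩).1 (h ⟨Δ, hΔ⟩ hacc))
      · intro h Δ hacc
        exact (ih hψ Δ).2 (hacc ψ h)
  | K a ψ ih => intro hK; exact absurd hK (by simp [Form.noK])

lemma canM_transit : (CanM owner withD).Transit := by
  intro a Γ Δ Θ h1 h2 ψ hψ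
  have hψK : ψ.noK := by simpa using Γ.2.subK _ hψ
  have h4 : BProv owner withD ((Form.B a ψ).imp (Form.B a (Form.B a ψ))) :=
    BProv.ax4B a hψK
  have : Form.B a (Form.B a ψ) ∈ Γ.1 :=
    Γ.2.mp_mem (by simp [hψK]) (by simp [hψK]) (Γ.2.mem_of_prv (by simp [hψK]) h4) hψ
  exact h2 ψ (h1 (Form.B a ψ) this)

lemma canM_eucl : (CanM owner withD).Eucl := by
  intro a Γ Δ Θ h1 h2 ψ hψ
  have hψK : ψ.noK := by simpa using Δ.2.subK _ hψ
  have hBΓ : Form.B a ψ ∈ Γ.1 := by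
    by_contra hn
    have hneg : Form.neg (Form.B a ψ) ∈ Γ.1 := (Γ.2.not_mem_iff (by simp [hψK])).1 hn
    have h5 : BProv owner withD ((Form.neg (Form.B a ψ)).imp
        (Form.B a (Form.neg (Form.B a ψ)))) := BProv.ax5B a hψK
    have : Form.B a (Form.neg (Form.B a ψ)) ∈ Γ.1 :=
      Γ.2.mp_mem (by simp [hψK]) (by simp [hψK]) (Γ.2.mem_of_prv (by simp [hψK]) h5) hneg
    have : Form.neg (Form.B a ψ) ∈ Δ.1 := h1 _ this
    exact (Δ.2.not_mem_iff (by simp [hψK])).2 this hψ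
  exact h2 ψ hBΓ

lemma canM_serial (hD : withD = true) : (CanM owner withD).Serial := by
  intro a Γ
  have hcons : ConsS owner withD (projB Γ.1 a) := by
    intro ⟨ξ, hξ, d1, d2⟩
    have dand : Deriv owner withD (projB Γ.1 a) (Form.and ξ (Form.neg ξ)) := by
      have t : BProv owner withD (ξ.imp ((Form.neg ξ).imp (Form.and ξ (Form.neg ξ)))) :=
        BProv.taut (by simp [hξ]) (taut_pair ξ (Form.neg ξ))
      exact ((Deriv.of_prv t).mp hξ (by simp [hξ]) d1).mp (by simp [hξ]) (by simp [hξ]) d2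
    have hB : Form.B a (Form.and ξ (Form.neg ξ)) ∈ Γ.1 :=
      projB_deriv Γ.2 (by simp [hξ]) dand
    have hD' : Form.neg (Form.B a (Form.and ξ (Form.neg ξ))) ∈ Γ.1 :=
      Γ.2.mem_of_prv (by simp [hξ]) (BProv.axDB a hD hξ)
    exact Γ.2.cons ⟨_, by simp [hξ], Deriv.of_mem (by simp [hξ]) hB,
      Deriv.of_mem (by simp [hξ]) hD'⟩
  obtain ⟨Δ, hsub, hΔ⟩ := lindenbaum (projB_noK Γ.2.subK a) hcons
  exact ⟨⟨Δ, hΔ⟩, fun ψ hψ => hsub hψ⟩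

lemma canM_local : (CanM owner withD).Local owner := by
  have key : ∀ (a : Ag) (Γ Δ : CanW owner withD), (CanM owner withD).B a Γ Δ →
      (CanM owner withD).V Γ ∩ {p | owner p = a} ⊆ (CanM owner withD).V Δ ∩ {p | owner p = a} := by
    intro a Γ Δ h p ⟨hp, hpa⟩
    have hLoc := Γ.2.mem_of_prv (ψ := Form.and ((Form.atom p).imp (Form.B a (Form.atom p)))
        ((Form.neg (Form.atom p)).imp (Form.B a (Form.neg (Form.atom p)))))
      (by simp) (BProv.axLoc a p hpa)
    have h1 : ((Form.atom p).imp (Form.B a (Form.atom p))) ∈ Γ.1 :=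
      ((Γ.2.and_mem (by simp) (by simp)).1 hLoc).1
    have h2 : Form.B a (Form.atom p) ∈ Γ.1 := Γ.2.mp_mem (by simp) (by simp) h1 hp
    exact ⟨h (Form.atom p) h2, hpa⟩
  have key2 : ∀ (a : Ag) (Γ Δ : CanW owner withD), (CanM owner withD).B a Γ Δ →
      (CanM owner withD).V Δ ∩ {p | owner p = a} ⊆ (CanM owner withD).V Γ ∩ {p | owner p = a} := by
    intro a Γ Δ h p ⟨hp, hpa⟩
    refine ⟨?_, hpa⟩
    by_contra hn
    have hneg : Form.neg (Form.atom p) ∈ Γ.1 := (Γ.2.not_mem_iff (by simp)).1 hn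
    have hLoc := Γ.2.mem_of_prv (ψ := Form.and ((Form.atom p).imp (Form.B a (Form.atom p)))
        ((Form.neg (Form.atom p)).imp (Form.B a (Form.neg (Form.atom p)))))
      (by simp) (BProv.axLoc a p hpa)
    have h1 : ((Form.neg (Form.atom p)).imp (Form.B a (Form.neg (Form.atom p)))) ∈ Γ.1 :=
      ((Γ.2.and_mem (by simp) (by simp)).1 hLoc).2
    have h2 : Form.B a (Form.neg (Form.atom p)) ∈ Γ.1 := Γ.2.mp_mem (by simp) (by simp) h1 hneg
    have h3 : Form.neg (Form.atom p) ∈ Δ.1 := h _ h2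
    exact (Δ.2.not_mem_iff (by simp)).2 h3 hp
  intro a Γ Δ h
  rcases h with h | h
  · exact Set.Subset.antisymm (key a Γ Δ h) (key2 a Γ Δ h)
  · exact Set.Subset.antisymm (key2 a Δ Γ h) (key a Δ Γ h)

end Canon

/-! #### Quotient construction: making a model proper -/

section Quot

variable {W : Type} (owner : Atom → Ag) (M : KModel Ag Atom W)

lemma succ_eq (htr : M.Transit) (heu : M.Eucl) {a : Ag} {u v : W}
    (h : Relation.EqvGen (M.B a) u v) : ∀ w, M.B a u w ↔ M.B a v w := by
  induction h with
  | rel u v h =>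
      intro w
      exact ⟨fun h2 => heu a u v w h h2, fun h2 => htr a u v w h h2⟩
  | refl u => intro w; exact Iff.rfl
  | symm u v _ ih => intro w; exact (ih w).symm
  | trans u v x _ _ ih1 ih2 => intro w; exact (ih1 w).trans (ih2 w)

lemma val_eq (hloc : M.Local owner) {a : Ag} {u v : W}
    (h : Relation.EqvGen (M.B a) u v) :
    M.V u ∩ {p | owner p = a} = M.V v ∩ {p | owner p = a} := by
  induction h with
  | rel u v h => exact hloc a u v (Or.inl h)
  | refl u => rfl
  | symm u v _ ih => exact ih.symm
  | trans u v x _ _ ih1 ih2 => exact ih1.trans ih2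

/-- The total-indistinguishability equivalence. -/
def eqvSetoid : Setoid W where
  r u v := ∀ a : Ag, Relation.EqvGen (M.B a) u v
  iseqv := ⟨fun u a => Relation.EqvGen.refl u,
    fun h a => Relation.EqvGen.symm _ _ (h a),
    fun h1 h2 a => Relation.EqvGen.trans _ _ _ (h1 a) (h2 a)⟩

lemma val_eq_full (hloc : M.Local owner) {u v : W} (h : (eqvSetoid M).r u v) :
    M.V u = M.V v := by
  ext p
  have := val_eq owner M hloc (h (owner p))
  constructor
  · intro hp
    have : p ∈ M.V v ∩ {q | owner q = owner p} := this ▸ ⟨hp, rfl⟩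
    exact this.1
  · intro hp
    have hmem : p ∈ M.V v ∩ {q | owner q = owner p} := ⟨hp, rfl⟩
    rw [← this] at hmem
    exact hmem.1

/-- The quotient model. -/
noncomputable def QM (hloc : M.Local owner) : KModel Ag Atom (Quotient (eqvSetoid M)) where
  B a q1 q2 := ∃ u v : W, M.B a u v ∧ Quotient.mk (eqvSetoid M) u = q1 ∧
    Quotient.mk (eqvSetoid M) v = q2
  V := Quotient.lift M.V (fun u v h => val_eq_full owner M hloc h)

variable (hloc : M.Local owner)

lemma QM_B_iff (htr : M.Transit) (heu : M.Eucl) {a : Ag} {u : W} {q : Quotient (eqvSetoid M)} :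
    (QM owner M hloc).B a (Quotient.mk (eqvSetoid M) u) q ↔
      ∃ v : W, M.B a u v ∧ Quotient.mk (eqvSetoid M) v = q := by
  constructor
  · intro ⟨u0, v0, hB, h1, h2⟩
    have hr : (eqvSetoid M).r u u0 := Quotient.exact (h1.symm ▸ rfl : Quotient.mk (eqvSetoid M) u = Quotient.mk (eqvSetoid M) u0)
    have : M.B a u v0 := (succ_eq M htr heu (hr a) v0).symm.1 hB
    exact ⟨v0, this, h2⟩
  · intro ⟨v, hB, h2⟩
    exact ⟨u, v, hB, rfl, h2⟩

lemma QM_transit (htr : M.Transit) (heu : M.Eucl) : (QM owner M hloc).Transit := by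
  intro a q1 q2 q3 h1 h2
  obtain ⟨u, v, hB1, hu, hv⟩ := h1
  obtain ⟨v', w, hB2, hv', hw⟩ := h2
  have hr : (eqvSetoid M).r v v' := Quotient.exact (hv.trans hv'.symm)
  have hB2' : M.B a v w := (succ_eq M htr heu (hr a) w).symm.1 hB2
  exact ⟨u, w, htr a u v w hB1 hB2', hu, hw⟩

lemma QM_eucl (htr : M.Transit) (heu : M.Eucl) : (QM owner M hloc).Eucl := by
  intro a q1 q2 q3 h1 h2
  obtain ⟨u, v, hB1, hu, hv⟩ := h1
  obtain ⟨u', w, hB2, hu', hw⟩ := h2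
  have hr : (eqvSetoid M).r u u' := Quotient.exact (hu.trans hu'.symm)
  have hB2' : M.B a u w := (succ_eq M htr heu (hr a) w).symm.1 hB2
  exact ⟨v, w, heu a u v w hB1 hB2', hv, hw⟩

lemma QM_serial (hser : M.Serial) : (QM owner M hloc).Serial := by
  intro a q
  obtain ⟨u, rfl⟩ := Quotient.exists_rep q
  obtain ⟨v, hv⟩ := hser a u
  exact ⟨Quotient.mk (eqvSetoid M) v, u, v, hv, rfl, rfl⟩

lemma QM_local : (QM owner M hloc).Local owner := by
  intro a q1 q2 h
  rcases h with ⟨u, v, hB, hu, hv⟩ | ⟨u, v, hB, hu, hv⟩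
  · subst hu; subst hv
    exact hloc a u v (Or.inl hB)
  · subst hu; subst hv
    exact (hloc a v u (Or.inr hB)).symm ▸ (hloc a u v (Or.inl hB)).symm
  
lemma QM_eqvgen (htr : M.Transit) (heu : M.Eucl) {a : Ag} {q1 q2 : Quotient (eqvSetoid M)}
    (h : Relation.EqvGen ((QM owner M hloc).B a) q1 q2) :
    ∀ u v : W, Quotient.mk (eqvSetoid M) u = q1 → Quotient.mk (eqvSetoid M) v = q2 →
      Relation.EqvGen (M.B a) u v := by
  induction h with
  | rel q1 q2 h =>
      intro u v hu hv
      obtain ⟨u0, v0, hB, hu0, hv0⟩ := h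
      have h1 : (eqvSetoid M).r u u0 := Quotient.exact (hu.trans hu0.symm)
      have h2 : (eqvSetoid M).r v0 v := Quotient.exact (hv0.trans hv.symm)
      exact Relation.EqvGen.trans _ _ _ (Relation.EqvGen.trans _ _ _ (h1 a)
        (Relation.EqvGen.rel _ _ hB)) (h2 a)
  | refl q =>
      intro u v hu hv
      exact (Quotient.exact (hu.trans hv.symm) : (eqvSetoid M).r u v) a
  | symm q1 q2 _ ih =>
      intro u v hu hv
      exact Relation.EqvGen.symm _ _ (ih v u hv hu)
  | trans q1 q2 q3 _ _ ih1 ih2 =>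
      intro u v hu hv
      obtain ⟨z, hz⟩ := Quotient.exists_rep q2
      exact Relation.EqvGen.trans _ _ _ (ih1 u z hu hz) (ih2 z v hz hv)

lemma QM_proper (htr : M.Transit) (heu : M.Eucl) : (QM owner M hloc).Proper := by
  intro q1 q2 hne
  obtain ⟨u, rfl⟩ := Quotient.exists_rep q1
  obtain ⟨v, rfl⟩ := Quotient.exists_rep q2
  have hr : ¬ (eqvSetoid M).r u v := fun hr => hne (Quotient.sound hr)
  rw [show ((eqvSetoid M).r u v) = ∀ a : Ag, Relation.EqvGen (M.B a) u v from rfl] at hr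
  push_neg at hr
  obtain ⟨a, ha⟩ := hr
  exact ⟨a, fun h => ha (QM_eqvgen owner M hloc htr heu h u v rfl rfl)⟩

lemma QM_ksat (htr : M.Transit) (heu : M.Eucl) : ∀ (ψ : Form Ag Atom), ψ.noK → ∀ u : W,
    (ksat (QM owner M hloc) (Quotient.mk (eqvSetoid M) u) ψ ↔ ksat M u ψ) := by
  intro ψ
  induction ψ with
  | atom p => intro _ u; rfl
  | neg ψ ih =>
      intro hK u
      exact not_congr (ih hK u)
  | and ψ χ ih1 ih2 =>
      intro hK u
      exact and_congr (ih1 hK.1 u) (ih2 hK.2 u)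
  | B a ψ ih =>
      intro hK u
      constructor
      · intro h v hv
        exact (ih hK v).1 (h (Quotient.mk (eqvSetoid M) v) ⟨u, v, hv, rfl, rfl⟩)
      · intro h q hq
        obtain ⟨v, hv, rfl⟩ := (QM_B_iff owner M hloc htr heu).1 hq
        exact (ih hK v).2 (h v hv)
  | K a ψ ih => intro hK; exact absurd hK (by simp [Form.noK])

end Quot

/-! #### Completeness -/

section Completeness

variable {owner : Atom → Ag} {withD : Bool}

lemma deriv_empty {φ : Form Ag Atom} (h : Deriv owner withD (∅ : Set (Form Ag Atom)) φ) :
    BProv owner withD φ := by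
  obtain ⟨L, hm, hk, hp⟩ := h
  have : L = [] := List.eq_nil_iff_forall_not_mem.2 fun ψ hψ => hm ψ hψ
  rw [this] at hp
  exact hp

lemma completeness {φ : Form Ag Atom} (hφ : φ.noK) (hnp : ¬ BProv owner withD φ) :
    ∃ (W : Type) (_ : Nonempty W) (M : KModel Ag Atom W),
      M.Local owner ∧ M.Proper ∧ M.Transit ∧ M.Eucl ∧ (withD = true → M.Serial) ∧
      ∃ w : W, ¬ ksat M w φ := by
  -- {¬φ} is consistent
  have hcons : ConsS owner withD (insert (Form.neg φ) (∅ : Set (Form Ag Atom))) := by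
    intro ⟨ξ, hξ, d1, d2⟩
    have e1 : Deriv owner withD (∅ : Set (Form Ag Atom)) ((Form.neg φ).imp ξ) :=
      Deriv.deduction (by simp [hφ]) hξ d1
    have e2 : Deriv owner withD (∅ : Set (Form Ag Atom)) ((Form.neg φ).imp (Form.neg ξ)) :=
      Deriv.deduction (by simp [hφ]) (by simp [hξ]) d2
    have t : BProv owner withD (((Form.neg φ).imp ξ).imp
        (((Form.neg φ).imp (Form.neg ξ)).imp (Form.neg (Form.neg φ)))) :=
      BProv.taut (by simp [hφ, hξ]) (taut_negI (Form.neg φ) ξ)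
    have e3 : Deriv owner withD (∅ : Set (Form Ag Atom)) (Form.neg (Form.neg φ)) :=
      ((Deriv.of_prv t).mp (by simp [hφ, hξ]) (by simp [hφ, hξ]) e1).mp
        (by simp [hφ, hξ]) (by simp [hφ]) e2
    have e4 : Deriv owner withD (∅ : Set (Form Ag Atom)) φ :=
      (Deriv.of_prv (BProv.taut (by simp [hφ]) (taut_dne φ))).mp (by simp [hφ]) hφ e3
    exact hnp (deriv_empty e4)
  obtain ⟨Γ, hsub, hΓ⟩ := lindenbaum (by
    intro ψ hψ
    rcases Set.mem_insert_iff.1 hψ with rfl | h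
    · simpa using hφ
    · exact absurd h (Set.notMem_empty ψ)) hcons
  have hnegmem : Form.neg φ ∈ Γ := hsub (Set.mem_insert _ _)
  have hnot : φ ∉ Γ := fun h => (hΓ.not_mem_iff hφ).2 hnegmem h
  set G : CanW owner withD := ⟨Γ, hΓ⟩ with hG
  have hnsat : ¬ ksat (CanM owner withD) G φ := fun h => hnot ((truth_lemma φ hφ G).1 h)
  -- quotient to make it proper
  have hloc := canM_local (owner := owner) (withD := withD)
  have htr := canM_transit (owner := owner) (withD := withD)
  have heu := canM_eucl (owner := owner) (withD := withD)
  refine ⟨Quotient (eqvSetoid (CanM owner withD)), ⟨Quotient.mk _ G⟩,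
    QM owner (CanM owner withD) hloc, QM_local owner _ hloc, QM_proper owner _ hloc htr heu,
    QM_transit owner _ hloc htr heu, QM_eucl owner _ hloc htr heu,
    fun hD => QM_serial owner _ hloc (canM_serial hD),
    Quotient.mk _ G, ?_⟩
  intro h
  exact hnsat ((QM_ksat owner _ hloc htr heu φ hφ G).1 h)

end Completeness

lemma soundness {withD : Bool} {owner : Atom → Ag} {φ : Form Ag Atom}
    (h : BProv owner withD φ) {W : Type} (M : KModel Ag Atom W)
    (hloc : M.Local owner) (htr : M.Transit) (heu : M.Eucl)
    (hser : withD = true → M.Serial) :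
    ∀ w, ksat M w φ := by
  induction h with
  | @taut ψ hnoK htaut =>
      intro w
      classical
      have h1 : ∀ χ : Form Ag Atom, decide (ksat M w (Form.neg χ)) = !decide (ksat M w χ) := by
        intro χ; simp only [ksat]; by_cases hc : ksat M w χ <;> simp [hc]
      have h2 : ∀ χ ξ : Form Ag Atom,
          decide (ksat M w (Form.and χ ξ)) = (decide (ksat M w χ) && decide (ksat M w ξ)) := by
        intro χ ξ; simp only [ksat]; by_cases hc : ksat M w χ <;> by_cases hd : ksat M w ξ <;> simp [hc, hd]
      exact of_decide_eq_true (htaut (fun χ => decide (ksat M w χ)) h1 h2)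
  | axKB a φ' ψ' =>
      intro w
      rw [ksat_imp, ksat_imp]
      intro h1 h2 u hu
      exact (ksat_imp M u _ _).1 (h1 u hu) (h2 u hu)
  | axDB a hD hφ' =>
      intro w
      simp only [ksat]
      intro hcon
      obtain ⟨u, hu⟩ := hser hD _ w
      exact (hcon u hu).2 (hcon u hu).1
  | ax4B a hφ' =>
      intro w
      rw [ksat_imp]
      intro h1 u hu v hv
      exact h1 v (htr _ _ _ _ hu hv)
  | ax5B a hφ' =>
      intro w
      rw [ksat_imp]
      simp only [ksat]
      intro h1 u hu h2
      exact h1 fun v hv => h2 v (heu _ _ _ _ hu hv)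
  | axLoc a p hp =>
      intro w
      have key : ∀ u, M.B a w u → (p ∈ M.V w ↔ p ∈ M.V u) := by
        intro u hu
        have := hloc a w u (Or.inl hu)
        constructor
        · intro hw
          have : p ∈ M.V w ∩ {q | owner q = a} := ⟨hw, hp⟩
          rw [hloc a w u (Or.inl hu)] at this
          exact this.1
        · intro hw
          have : p ∈ M.V u ∩ {q | owner q = a} := ⟨hw, hp⟩
          rw [← hloc a w u (Or.inl hu)] at this
          exact this.1
      refine ⟨?_, ?_⟩
      · rw [ksat_imp]
        intro h1 u hu
        exact (key u hu).1 h1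
      · rw [ksat_imp]
        intro h1 u hu
        simp only [ksat] at h1 ⊢
        exact fun hc => h1 ((key u hu).2 hc)
  | mp _ _ ih1 ih2 =>
      intro w
      exact (ksat_imp M w _ _).1 (ih1 w) (ih2 w)
  | nec a _ ih =>
      intro w u hu
      exact ih u

end Proof15

/-- LocK45 is sound and complete with respect to the class
`K^{TE}_n` of local, proper, transitive and Euclidean doxastic Kripke models,
and LocKD45 is sound and complete with respect to the class `K^{STE}_n` of
local, proper, serial, transitive and Euclidean doxastic Kripke models, for
formulas of the doxastic fragment `L_B`. -/
theorem statement_15 {Ag Atom : Type} [Fintype Ag] [Nonempty Ag] [Countable Atom]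
    (owner : Atom → Ag) (φ : Form Ag Atom) (hφ : φ.noK) :
    (BProv owner false φ ↔
      ∀ (W : Type) (_ : Nonempty W) (M : KModel Ag Atom W),
        M.Local owner → M.Proper → M.Transit → M.Eucl →
        ∀ w : W, ksat M w φ) ∧
    (BProv owner true φ ↔
      ∀ (W : Type) (_ : Nonempty W) (M : KModel Ag Atom W),
        M.Local owner → M.Proper → M.Serial → M.Transit → M.Eucl →
        ∀ w : W, ksat M w φ) := by
  constructor
  · constructor
    · intro h W _ M hloc _ htr heu w
      exact soundness h M hloc htr heu (fun hD => by cases hD) w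
    · intro h
      by_contra hnp
      obtain ⟨W, hne, M, hloc, hprop, htr, heu, _, w, hw⟩ := completeness hφ hnp
      exact hw (h W hne M hloc hprop htr heu w)
  · constructor
    · intro h W _ M hloc _ hser htr heu w
      exact soundness h M hloc htr heu (fun _ => hser) w
    · intro h
      by_contra hnp
      obtain ⟨W, hne, M, hloc, hprop, htr, heu, hser, w, hw⟩ := completeness hφ hnp
      exact hw (h W hne M hloc hprop (hser rfl) htr heu w)

end DoxHG
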